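/- arXiv:1807.08846 — 2 statements merged into one kernel-verified Lean document; each statement's English description precedes it below -/
import Mathlib

section
/- For s,t >= 1, any two distinct vertices of LeTQ(s,t) have at most two common neighbors; equivalently, LeTQ(s,t) contains no subgraph isomorphic to K_{2,3}. -/
/-!
Along the dimension-`k` edge at a vertex `x` of the locally twisted cube `LTQ n`, the flipped
bits form a mask depending only on `k` and on bit `0` of `x`, and bit `0` is preserved by the
move unless `k = 0`, where the mask is the same for both values of bit `0`. So each common
neighbour `z` of `x ≠ y` writes `x + y` (over `𝔽₂`) as `mask(x₀, k) + mask(y₀, l)`, and `z` is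
determined by `k`. Comparing top bits, three such decompositions with `k₁ < k₂ < k₃` force
`l₃ = k₃`, hence `x + y = mask(x₀, k₃) + mask(y₀, k₃)` is the single bit `k₃ - 1` with
`x₀ ≠ y₀`, and this bit pins down `k₁ = k₂`.

In `LeTQ(s,t)`, vertices with different `c`-bits share only the neighbours obtained by flipping
`c`, while vertices with the same `c`-bit share only neighbours in their own layer, a copy of
`LTQ t` (for `c = 1`) or `LTQ s` (for `c = 0`). Exchanging `a` with `b` and negating `c` is an
isomorphism `LeTQ(s,t) ≃ LeTQ(t,s)`, so only the layer `c = 1` needs to be treated.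
-/

/-- Flip bit `k` of the binary string `x`. -/
def bflip {n : ℕ} (x : Fin n → Bool) (k : Fin n) : Fin n → Bool :=
  Function.update x k (!(x k))

/-- Locally twisted cube adjacency on `n`-bit binary strings:
either flip bit `k` for some `k ≤ 1`; or, for some `k ≥ 2`, flip bits `k` and `k-1`
when bit 0 is `1`, resp. flip only bit `k` when bit 0 is `0`. -/
def cubeAdj (n : ℕ) (x y : Fin n → Bool) : Prop :=
  (∃ k : Fin n, (k : ℕ) ≤ 1 ∧ y = bflip x k) ∨
  (∃ k : Fin n, 2 ≤ (k : ℕ) ∧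
    ((∃ h0 : 0 < n, x ⟨0, h0⟩ = true ∧
        y = bflip (bflip x k) ⟨(k : ℕ) - 1, lt_of_le_of_lt (Nat.sub_le _ _) k.isLt⟩) ∨
     (∃ h0 : 0 < n, x ⟨0, h0⟩ = false ∧ y = bflip x k)))

/-- The locally twisted cube `LTQ_n`. -/
def LTQ (n : ℕ) : SimpleGraph (Fin n → Bool) where
  Adj x y := x ≠ y ∧ (cubeAdj n x y ∨ cubeAdj n y x)
  symm := ⟨fun _ _ h => ⟨h.1.symm, h.2.symm⟩⟩
  loopless := ⟨fun _ h => h.1 rfl⟩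

/-- A vertex of `LeTQ(s,t)`: the `a`-bits, the `b`-bits and the bit `c`. -/
abbrev LeTQVert (s t : ℕ) := (Fin s → Bool) × (Fin t → Bool) × Bool

/-- One-sided adjacency condition of the locally exchanged twisted cube. -/
def LeTQAdjOne (s t : ℕ) (u v : LeTQVert s t) : Prop :=
  (u.1 = v.1 ∧ u.2.1 = v.2.1 ∧ u.2.2 = !v.2.2) ∨
  (u.2.2 = true ∧ v.2.2 = true ∧ u.1 = v.1 ∧ cubeAdj t u.2.1 v.2.1) ∨
  (u.2.2 = false ∧ v.2.2 = false ∧ u.2.1 = v.2.1 ∧ cubeAdj s u.1 v.1)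

/-- The locally exchanged twisted cube `LeTQ(s,t)`. -/
def LeTQ (s t : ℕ) : SimpleGraph (LeTQVert s t) where
  Adj u v := u ≠ v ∧ (LeTQAdjOne s t u v ∨ LeTQAdjOne s t v u)
  symm := ⟨fun _ _ h => ⟨h.1.symm, h.2.symm⟩⟩
  loopless := ⟨fun _ h => h.1 rfl⟩

theorem Set.ncard_le_two_of_forall_not_lt_lt {α : Type*} [LinearOrder α] {s : Set α}
    (h : ∀ a ∈ s, ∀ b ∈ s, ∀ c ∈ s, a < b → b < c → False) : s.ncard ≤ 2 := by
  rcases s.finite_or_infinite with hs | hs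
  · by_contra! h3
    rw [← hs.coe_toFinset, Set.ncard_coe_finset] at h3
    let f := hs.toFinset.orderEmbOfFin rfl
    have mem : ∀ i, f i ∈ s := fun i => hs.mem_toFinset.mp (hs.toFinset.orderEmbOfFin_mem rfl i)
    exact h _ (mem ⟨0, by omega⟩) _ (mem ⟨1, by omega⟩) _ (mem ⟨2, by omega⟩)
      (f.strictMono (by simp [Fin.lt_def])) (f.strictMono (by simp [Fin.lt_def]))
  · simp [hs.ncard]

-- The nested `↔` form is what `omega` can consume after `simp` has unfolded the masks.
theorem Bool.xor_eq_xor_iff {p q r s : Bool} :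
    (p ^^ q) = (r ^^ s) ↔ ((p = true ↔ q = true) ↔ (r = true ↔ s = true)) := by
  revert p q r s; decide

theorem Bool.xor_eq_xor_comm {p q r s : Bool} : (p ^^ q) = (r ^^ s) ↔ (p ^^ r) = (q ^^ s) := by
  revert p q r s; decide

/-- The bits flipped by the dimension-`k` edge of `LTQ` at a vertex whose bit `0` is `c`,
as an indicator on all of `ℕ`. -/
def moveMask (c : Bool) (k j : ℕ) : Bool :=
  decide (j = k ∨ (c = true ∧ 2 ≤ k ∧ j = k - 1))

namespace moveMask

theorem eq_true_iff {c : Bool} {k j : ℕ} :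
    moveMask c k j = true ↔ j = k ∨ (c = true ∧ 2 ≤ k ∧ j = k - 1) := by
  simp [moveMask]

theorem of_lt {c : Bool} {k j : ℕ} (h : k < j) : moveMask c k j = false := by
  simp only [moveMask, decide_eq_false_iff_not]
  omega

theorem of_not {c : Bool} {k : ℕ} (h : ¬(c = true ∧ 2 ≤ k)) (j : ℕ) :
    moveMask c k j = decide (j = k) := by
  simp only [moveMask, decide_eq_decide]
  tauto

theorem true_of_two_le {k : ℕ} (h : 2 ≤ k) (j : ℕ) :
    moveMask true k j = (decide (j = k) ^^ decide (j = k - 1)) := by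
  by_cases j = k <;> simp [moveMask, *]
  omega

theorem eq_of_eq_xor {c c' : Bool} {k : ℕ} (h : c' = (c ^^ moveMask c k 0)) :
    moveMask c' k = moveMask c k := by
  funext j
  cases c <;> cases c' <;> simp_all [moveMask] <;> omega

theorem max_eq_of_xor_eq {a b : Bool} {k k' l l' : ℕ}
    (h : ∀ j, (moveMask a k j ^^ moveMask a k' j) = (moveMask b l j ^^ moveMask b l' j))
    (hk : k < k') : max l l' = k' := by
  have h₁ := h k'
  have h₂ := h (max l l')
  cases a <;> cases b <;>
    simp only [Bool.xor_eq_xor_iff, eq_true_iff, Bool.false_eq_true, false_and, or_false,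
      true_and, true_or, iff_true, sup_eq_left, sup_eq_right] at h₁ h₂ <;>
    omega

theorem eq_of_xor_eq_diag {a : Bool} {k l m : ℕ}
    (h : ∀ j, (moveMask a k j ^^ moveMask (!a) l j) = (moveMask a m j ^^ moveMask (!a) m j))
    (hk : k < m) (hl : l < m) : k = if a then m - 1 else m - 2 := by
  have h₁ := h k
  have h₂ := h l
  have h₃ := h (m - 1)
  have h₄ := h (k - 1)
  have h₅ := h (l - 1)
  cases a <;>
    simp only [Bool.not_true, Bool.not_false, Bool.xor_eq_xor_iff, eq_true_iff,
      Bool.false_eq_true, false_and, or_false, true_and, true_or, true_iff, iff_true, and_true,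
      iff_self_or, or_iff_left_iff_imp, and_imp, ↓reduceIte] at h₁ h₂ h₃ h₄ h₅ ⊢ <;>
    omega

theorem not_three_decompositions {a b : Bool} {D : ℕ → Bool} (hD : ∃ j, D j = true)
    {k₁ k₂ k₃ l₁ l₂ l₃ : ℕ}
    (h₁ : ∀ j, D j = (moveMask a k₁ j ^^ moveMask b l₁ j))
    (h₂ : ∀ j, D j = (moveMask a k₂ j ^^ moveMask b l₂ j))
    (h₃ : ∀ j, D j = (moveMask a k₃ j ^^ moveMask b l₃ j))
    (h₁₂ : k₁ < k₂) (h₂₃ : k₂ < k₃) : False := by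
  have hmax : ∀ {k k' l l' : ℕ}, k < k' → (∀ j, D j = (moveMask a k j ^^ moveMask b l j)) →
      (∀ j, D j = (moveMask a k' j ^^ moveMask b l' j)) → max l l' = k' :=
    fun hk h h' => max_eq_of_xor_eq (fun j => Bool.xor_eq_xor_comm.1 ((h j).symm.trans (h' j))) hk
  have m₂ := hmax h₁₂ h₁ h₂
  have m₃ := hmax (h₁₂.trans h₂₃) h₁ h₃
  obtain rfl : l₃ = k₃ := by omega
  -- now `D` is the single bit `k₃ - 1`, which leaves only one choice for `k₁` and for `k₂`
  obtain rfl : b = !a := Bool.eq_not.2 fun hba => by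
    subst hba
    obtain ⟨j, hj⟩ := hD
    rw [h₃, Bool.xor_self] at hj
    exact Bool.false_ne_true hj
  have e₁ := eq_of_xor_eq_diag (fun j => (h₁ j).symm.trans (h₃ j)) (by omega) (by omega)
  have e₂ := eq_of_xor_eq_diag (fun j => (h₂ j).symm.trans (h₃ j)) (by omega) (by omega)
  exact h₁₂.ne (e₁.trans e₂.symm)

end moveMask

theorem bflip_apply {n : ℕ} (x : Fin n → Bool) (k i : Fin n) :
    bflip x k i = (x i ^^ decide ((i : ℕ) = k)) := by
  by_cases h : i = k
  · subst h; simp [bflip]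
  · simp [bflip, Function.update_of_ne h, Fin.val_ne_of_ne h]

theorem cubeAdj_iff {n : ℕ} (hn : 0 < n) {x z : Fin n → Bool} :
    cubeAdj n x z ↔ ∃ k < n, ∀ i : Fin n, z i = (x i ^^ moveMask (x ⟨0, hn⟩) k i) := by
  constructor
  · rintro (⟨k, hk, rfl⟩ | ⟨k, hk, ⟨_, h0, rfl⟩ | ⟨_, h0, rfl⟩⟩) <;> refine ⟨k, k.2, fun i => ?_⟩
    · rw [moveMask.of_not (by omega), bflip_apply]
    · rw [h0, moveMask.true_of_two_le hk, bflip_apply, bflip_apply, Bool.xor_assoc]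
    · rw [h0, moveMask.of_not (by simp), bflip_apply]
  · rintro ⟨k, hk, hz⟩
    obtain ⟨k, rfl⟩ : ∃ k' : Fin n, (k' : ℕ) = k := ⟨⟨k, hk⟩, rfl⟩
    rcases le_or_gt (k : ℕ) 1 with hk | hk
    · refine .inl ⟨k, hk, funext fun i => ?_⟩
      rw [hz, moveMask.of_not (by omega), bflip_apply]
    · refine .inr ⟨k, hk, ?_⟩
      cases h0 : x ⟨0, hn⟩
      · refine .inr ⟨hn, h0, funext fun i => ?_⟩
        rw [hz, h0, moveMask.of_not (by simp), bflip_apply]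
      · refine .inl ⟨hn, h0, funext fun i => ?_⟩
        rw [hz, h0, moveMask.true_of_two_le hk, bflip_apply, bflip_apply, Bool.xor_assoc]

namespace LTQ

theorem adj_iff {n : ℕ} (hn : 0 < n) {x z : Fin n → Bool} :
    (LTQ n).Adj x z ↔ ∃ k < n, ∀ i : Fin n, z i = (x i ^^ moveMask (x ⟨0, hn⟩) k i) := by
  constructor
  · rintro ⟨-, h | h⟩
    · exact (cubeAdj_iff hn).1 h
    · obtain ⟨k, hk, hx⟩ := (cubeAdj_iff hn).1 h
      have hmask := moveMask.eq_of_eq_xor (hx ⟨0, hn⟩)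
      refine ⟨k, hk, fun i => ?_⟩
      rw [hx i, Bool.xor_assoc, hmask, Bool.xor_self, Bool.xor_false]
  · rintro ⟨k, hk, hz⟩
    refine ⟨fun hxz => ?_, .inl ((cubeAdj_iff hn).2 ⟨k, hk, hz⟩)⟩
    subst hxz
    simpa [moveMask] using hz ⟨k, hk⟩

theorem ncard_commonNeighbors_le_two {n : ℕ} {x y : Fin n → Bool} (hxy : x ≠ y) :
    ((LTQ n).commonNeighbors x y).ncard ≤ 2 := by
  have hn : 0 < n := Nat.pos_of_ne_zero fun h => by subst h; exact hxy (Subsingleton.elim _ _)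
  set a := x ⟨0, hn⟩
  set D : ℕ → Bool := fun j => if h : j < n then (x ⟨j, h⟩ ^^ y ⟨j, h⟩) else false
  set K := {k | k < n ∧ ∃ l, ∀ j, D j = (moveMask a k j ^^ moveMask (y ⟨0, hn⟩) l j)}
  have hD : ∃ j, D j = true := by
    obtain ⟨i, hi⟩ := Function.ne_iff.1 hxy
    exact ⟨i, by simpa [D] using hi⟩
  have hsub : (LTQ n).commonNeighbors x y ⊆ (fun k i => x i ^^ moveMask a k i) '' K := by
    rintro z ⟨hxz, hyz⟩
    obtain ⟨k, hk, hz⟩ := (adj_iff hn).1 hxz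
    obtain ⟨l, hl, hz'⟩ := (adj_iff hn).1 hyz
    refine ⟨k, ⟨hk, l, fun j => ?_⟩, funext fun i => (hz i).symm⟩
    by_cases hj : j < n
    · simpa [D, hj] using Bool.xor_eq_xor_comm.1 ((hz ⟨j, hj⟩).symm.trans (hz' ⟨j, hj⟩))
    · simp [D, hj, moveMask.of_lt (show k < j by omega), moveMask.of_lt (show l < j by omega)]
  calc _ ≤ _ := Set.ncard_le_ncard hsub
    _ ≤ K.ncard := Set.ncard_image_le ((Set.finite_Iio n).subset fun _ hk => hk.1)
    _ ≤ 2 := Set.ncard_le_two_of_forall_not_lt_lt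
      fun _ ⟨_, _, h₁⟩ _ ⟨_, _, h₂⟩ _ ⟨_, _, h₃⟩ => moveMask.not_three_decompositions hD h₁ h₂ h₃

end LTQ

theorem SimpleGraph.Iso.ncard_commonNeighbors {V W : Type*} {G : SimpleGraph V}
    {H : SimpleGraph W} (e : G ≃g H) (u v : V) :
    (H.commonNeighbors (e u) (e v)).ncard = (G.commonNeighbors u v).ncard := by
  rw [commonNeighbors_eq, commonNeighbors_eq, ← e.image_neighborSet, ← e.image_neighborSet,
    ← Set.image_inter e.injective, Set.ncard_image_of_injective _ e.injective]

namespace LeTQ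

variable {s t : ℕ}

def flipC (u : LeTQVert s t) : LeTQVert s t := (u.1, u.2.1, !u.2.2)

theorem flipC_injective : Function.Injective (flipC : LeTQVert s t → LeTQVert s t) :=
  fun u v h => by simpa [flipC, Prod.ext_iff] using h

def swap : LeTQVert s t ≃ LeTQVert t s where
  toFun u := (u.2.1, u.1, !u.2.2)
  invFun u := (u.2.1, u.1, !u.2.2)
  left_inv _ := by simp
  right_inv _ := by simp

theorem adjOne_swap {u v : LeTQVert s t} :
    LeTQAdjOne t s (swap u) (swap v) ↔ LeTQAdjOne s t u v := by
  simp only [LeTQAdjOne, swap, Equiv.coe_fn_mk, Bool.not_not, Bool.not_eq_eq_eq_not]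
  tauto

def swapIso (s t : ℕ) : LeTQ s t ≃g LeTQ t s where
  toEquiv := swap
  map_rel_iff' {u v} := by
    simp only [LeTQ, adjOne_swap, ne_eq, swap.injective.eq_iff]

theorem eq_flipC_or_layer_eq {u w : LeTQVert s t} (h : (LeTQ s t).Adj u w) :
    w = flipC u ∨ w.2.2 = u.2.2 := by
  obtain ⟨-, (⟨h₁, h₂, h₃⟩ | ⟨h₁, h₂, -⟩ | ⟨h₁, h₂, -⟩) |
    (⟨h₁, h₂, h₃⟩ | ⟨h₁, h₂, -⟩ | ⟨h₁, h₂, -⟩)⟩ := h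
  · exact .inl (Prod.ext h₁.symm (Prod.ext h₂.symm (by simp [flipC, h₃])))
  · exact .inr (h₂.trans h₁.symm)
  · exact .inr (h₂.trans h₁.symm)
  · exact .inl (Prod.ext h₁ (Prod.ext h₂ h₃))
  · exact .inr (h₁.trans h₂.symm)
  · exact .inr (h₁.trans h₂.symm)

theorem adj_of_layer_true {u w : LeTQVert s t} (h : (LeTQ s t).Adj u w) (hu : u.2.2 = true)
    (hw : w.2.2 = true) : w.1 = u.1 ∧ (LTQ t).Adj u.2.1 w.2.1 := by
  obtain ⟨hne, (⟨-, -, h⟩ | ⟨-, -, h₁, h₂⟩ | ⟨h, -⟩) | (⟨-, -, h⟩ | ⟨-, -, h₁, h₂⟩ | ⟨h, -⟩)⟩ := h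
  · simp [hu, hw] at h
  · exact ⟨h₁.symm, fun h => hne (Prod.ext h₁ (Prod.ext h (hu.trans hw.symm))), .inl h₂⟩
  · simp [hu] at h
  · simp [hu, hw] at h
  · exact ⟨h₁, fun h => hne (Prod.ext h₁.symm (Prod.ext h (hu.trans hw.symm))), .inr h₂⟩
  · simp [hw] at h

theorem commonNeighbors_subset_of_layer_ne {u v : LeTQVert s t} (h : u.2.2 ≠ v.2.2) :
    (LeTQ s t).commonNeighbors u v ⊆ {flipC u, flipC v} := by
  rintro w ⟨hu, hv⟩
  rcases eq_flipC_or_layer_eq hu with rfl | hwu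
  · exact .inl rfl
  rcases eq_flipC_or_layer_eq hv with rfl | hwv
  · exact .inr rfl
  exact absurd (hwu.symm.trans hwv) h

theorem mem_commonNeighbors_of_layer_true {u v w : LeTQVert s t} (huv : u ≠ v)
    (hu : u.2.2 = true) (hv : v.2.2 = true) (hw : w ∈ (LeTQ s t).commonNeighbors u v) :
    w.2.2 = true ∧ w.1 = u.1 ∧ w.1 = v.1 ∧ w.2.1 ∈ (LTQ t).commonNeighbors u.2.1 v.2.1 := by
  have hw₂ : w.2.2 = true := by
    rcases eq_flipC_or_layer_eq hw.1 with rfl | hwu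
    · rcases eq_flipC_or_layer_eq hw.2 with h | h
      · exact absurd (flipC_injective h) huv
      · simp [flipC, hu, hv] at h
    · rw [hwu, hu]
  obtain ⟨hwu, hu'⟩ := adj_of_layer_true hw.1 hu hw₂
  obtain ⟨hwv, hv'⟩ := adj_of_layer_true hw.2 hv hw₂
  exact ⟨hw₂, hwu, hwv, hu', hv'⟩

theorem ncard_commonNeighbors_le_two_of_layer_true {u v : LeTQVert s t} (huv : u ≠ v)
    (hu : u.2.2 = true) (hv : v.2.2 = true) : ((LeTQ s t).commonNeighbors u v).ncard ≤ 2 := by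
  by_cases ha : u.1 = v.1
  · have hb : u.2.1 ≠ v.2.1 := fun hb => huv (Prod.ext ha (Prod.ext hb (hu.trans hv.symm)))
    have hsub : (LeTQ s t).commonNeighbors u v ⊆
        (fun b => (u.1, b, true)) '' (LTQ t).commonNeighbors u.2.1 v.2.1 := fun w hw => by
      obtain ⟨hc, hwu, -, hb⟩ := mem_commonNeighbors_of_layer_true huv hu hv hw
      exact ⟨w.2.1, hb, Prod.ext hwu.symm (Prod.ext rfl hc.symm)⟩
    calc _ ≤ _ := Set.ncard_le_ncard hsub
      _ = _ := Set.ncard_image_of_injective _ fun _ _ h => congrArg (·.2.1) h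
      _ ≤ 2 := LTQ.ncard_commonNeighbors_le_two hb
  · have hempty : (LeTQ s t).commonNeighbors u v = ∅ := Set.eq_empty_of_forall_notMem fun w hw =>
      have ⟨_, hwu, hwv, _⟩ := mem_commonNeighbors_of_layer_true huv hu hv hw
      ha (hwu.symm.trans hwv)
    simp [hempty]

end LeTQ

theorem stmt5_general (s t : ℕ) (u v : LeTQVert s t) (huv : u ≠ v) :
    ((LeTQ s t).neighborSet u ∩ (LeTQ s t).neighborSet v).ncard ≤ 2 := by
  rw [← SimpleGraph.commonNeighbors_eq]
  wlog hu : u.2.2 = true generalizing s t u v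
  · rw [← (LeTQ.swapIso s t).ncard_commonNeighbors]
    exact this t s _ _ ((LeTQ.swapIso s t).injective.ne huv)
      (by simpa [LeTQ.swapIso, LeTQ.swap] using hu)
  by_cases hv : v.2.2 = true
  · exact LeTQ.ncard_commonNeighbors_le_two_of_layer_true huv hu hv
  · have hne : u.2.2 ≠ v.2.2 := by rw [hu]; exact Ne.symm hv
    calc _ ≤ _ := Set.ncard_le_ncard (LeTQ.commonNeighbors_subset_of_layer_ne hne)
      _ ≤ 2 := (Set.ncard_insert_le _ _).trans (by simp)

/-- Any two distinct vertices of LeTQ(s,t) have at most two common neighbors. -/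
theorem stmt5 (s t : ℕ) (hs : 1 ≤ s) (ht : 1 ≤ t) (u v : LeTQVert s t) (huv : u ≠ v) :
    ((LeTQ s t).neighborSet u ∩ (LeTQ s t).neighborSet v).ncard ≤ 2 :=
  stmt5_general s t u v huv
end

section
/- If H is a subgraph of LeTQ(s,t) (s,t >= 1) with minimum degree at least g, then H has at least 2^g vertices. -/
def IsTopDiff {ι α : Type*} [LT ι] (f g : ι → α) (k : ι) : Prop :=
  f k ≠ g k ∧ ∀ j, k < j → f j = g j

namespace IsTopDiff

variable {ι α : Type*} {f g : ι → α} {k k' : ι}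

theorem symm [LT ι] (h : IsTopDiff f g k) : IsTopDiff g f k :=
  ⟨h.1.symm, fun j hj => (h.2 j hj).symm⟩

theorem unique [LinearOrder ι] (h : IsTopDiff f g k) (h' : IsTopDiff f g k') : k = k' := by
  by_contra hne
  rcases lt_or_gt_of_ne hne with hlt | hlt
  · exact h'.1 (h.2 k' hlt)
  · exact h.1 (h'.2 k hlt)

end IsTopDiff

section TopDiffGraph

variable {V : Type*} {G : SimpleGraph V} {code : V → ℕ → Bool} {move : V → ℕ → V}

def EdgesBelow (G : SimpleGraph V) (code : V → ℕ → Bool) (S : Set V) (m : ℕ) : Prop :=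
  ∀ x ∈ S, ∀ y ∈ S, G.Adj x y → ∀ j, m ≤ j → code x j = code y j

theorem EdgesBelow.mono {S T : Set V} {m : ℕ} (hS : EdgesBelow G code S m) (hTS : T ⊆ S) :
    EdgesBelow G code T m :=
  fun x hx y hy => hS x (hTS hx) y (hTS hy)

theorem EdgesBelow.of_succ {S : Set V} {m : ℕ} (hS : EdgesBelow G code S (m + 1))
    (hm : ∀ x ∈ S, ∀ y ∈ S, code x m = code y m) : EdgesBelow G code S m := by
  intro x hx y hy hxy j hj
  rcases hj.eq_or_lt with rfl | hlt
  · exact hm x hx y hy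
  · exact hS x hx y hy hxy j hlt

theorem ncard_neighborSet_inter_le_succ [Finite V]
    (hmove : ∀ ⦃u v⦄, G.Adj u v → ∃ k, IsTopDiff (code u) (code v) k ∧ v = move u k)
    {S : Set V} {m : ℕ} (hS : EdgesBelow G code S (m + 1)) {x : V} (hx : x ∈ S) :
    (G.neighborSet x ∩ S).ncard ≤
      (G.neighborSet x ∩ (S ∩ {y | code y m = code x m})).ncard + 1 := by
  -- a neighbour across coordinate `m` has top difference `m`, so it can only be `move x m`
  have hacross : ∀ w ∈ (G.neighborSet x ∩ S) \ {y | code y m = code x m}, w = move x m := by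
    rintro w ⟨⟨hxw, hw⟩, hwm⟩
    obtain ⟨k, hk, rfl⟩ := hmove hxw
    have hm : IsTopDiff (code x) (code (move x k)) m :=
      ⟨Ne.symm hwm, fun j hj => hS x hx _ hw hxw j hj⟩
    rw [hk.unique hm]
  have hle : ((G.neighborSet x ∩ S) \ {y | code y m = code x m}).ncard ≤ 1 :=
    (Set.ncard_le_one_iff (Set.toFinite _)).2 fun hy hz => (hacross _ hy).trans (hacross _ hz).symm
  have hcount := Set.ncard_inter_add_ncard_sdiff_eq_ncard (G.neighborSet x ∩ S)
    {y | code y m = code x m}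
  rw [Set.inter_assoc] at hcount
  omega

theorem two_pow_le_ncard_of_edgesBelow [Finite V]
    (hmove : ∀ ⦃u v⦄, G.Adj u v → ∃ k, IsTopDiff (code u) (code v) k ∧ v = move u k)
    (m : ℕ) {g : ℕ} {S : Set V} (hne : S.Nonempty)
    (hdeg : ∀ x ∈ S, g ≤ (G.neighborSet x ∩ S).ncard) (hS : EdgesBelow G code S m) :
    2 ^ g ≤ S.ncard := by
  induction m generalizing g S with
  | zero =>
    obtain ⟨x, hx⟩ := hne
    have hisol : G.neighborSet x ∩ S = ∅ := by
      refine Set.eq_empty_of_forall_notMem fun y ⟨hxy, hy⟩ => ?_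
      obtain ⟨k, hk, -⟩ := hmove hxy
      exact hk.1 (hS x hx y hy hxy k k.zero_le)
    have hg : g = 0 := by simpa [hisol] using hdeg x hx
    rw [hg, pow_zero]
    exact (Set.ncard_pos (Set.toFinite S)).2 ⟨x, hx⟩
  | succ m ih =>
    by_cases hsplit : ∃ x ∈ S, ∃ y ∈ S, code x m ≠ code y m
    · obtain ⟨x₀, hx₀, y₀, hy₀, hxy₀⟩ := hsplit
      cases g with
      | zero => exact hne.ncard_pos
      | succ g =>
        have hhalf : ∀ x ∈ S, 2 ^ g ≤ (S ∩ {y | code y m = code x m}).ncard := by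
          intro x hx
          refine ih ⟨x, hx, rfl⟩ (fun y ⟨hy, (hyx : code y m = code x m)⟩ => ?_) ?_
          · have hloss := ncard_neighborSet_inter_le_succ hmove hS hy
            have hy_deg := hdeg y hy
            rw [← hyx]
            omega
          · exact (hS.mono Set.inter_subset_left).of_succ
              fun y ⟨_, hy⟩ z ⟨_, hz⟩ => hy.trans hz.symm
        have hcompl : S \ {y | code y m = code x₀ m} = S ∩ {y | code y m = code y₀ m} := by
          ext y
          simp only [Set.mem_sdiff, Set.mem_inter_iff, Set.mem_ofPred_eq]
          cases h₀ : code x₀ m <;> cases h₁ : code y₀ m <;> cases code y m <;> simp_all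
        rw [← Set.ncard_inter_add_ncard_sdiff_eq_ncard S {y | code y m = code x₀ m}, hcompl,
          pow_succ, mul_two]
        exact Nat.add_le_add (hhalf x₀ hx₀) (hhalf y₀ hy₀)
    · push Not at hsplit
      exact ih hne hdeg (hS.of_succ hsplit)

end TopDiffGraph

section LocallyTwistedCube

variable {n : ℕ}

theorem bflip_apply_self (x : Fin n → Bool) (k : Fin n) : bflip x k k = !x k :=
  Function.update_self _ _ _

theorem bflip_apply_of_ne (x : Fin n → Bool) {k j : Fin n} (h : j ≠ k) : bflip x k j = x j :=
  Function.update_of_ne h _ _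

def ltqFlip (x : Fin n → Bool) (k : Fin n) : Fin n → Bool :=
  if 2 ≤ (k : ℕ) ∧ x ⟨0, k.pos⟩ = true then
    bflip (bflip x k) ⟨(k : ℕ) - 1, lt_of_le_of_lt (Nat.sub_le _ _) k.isLt⟩
  else bflip x k

theorem ltqFlip_apply_of_ne (x : Fin n → Bool) {k j : Fin n} (hk : j ≠ k)
    (hk' : (j : ℕ) + 1 ≠ k) : ltqFlip x k j = x j := by
  have hk'' : j ≠ ⟨(k : ℕ) - 1, lt_of_le_of_lt (Nat.sub_le _ _) k.isLt⟩ :=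
    Fin.ne_of_val_ne (by have := Fin.val_ne_of_ne hk; dsimp only; omega)
  unfold ltqFlip
  split_ifs
  · rw [bflip_apply_of_ne _ hk'', bflip_apply_of_ne _ hk]
  · rw [bflip_apply_of_ne _ hk]

theorem ltqFlip_apply_self (x : Fin n → Bool) (k : Fin n) : ltqFlip x k k = !x k := by
  unfold ltqFlip
  split_ifs with h
  · rw [bflip_apply_of_ne _ (Fin.ne_of_val_ne (by dsimp only; omega)), bflip_apply_self]
  · exact bflip_apply_self x k

theorem isTopDiff_ltqFlip (x : Fin n → Bool) (k : Fin n) : IsTopDiff x (ltqFlip x k) k := by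
  refine ⟨by simp [ltqFlip_apply_self], fun j hj => (ltqFlip_apply_of_ne x hj.ne' ?_).symm⟩
  have : (k : ℕ) < j := hj
  omega

theorem bflip_bflip (x : Fin n → Bool) (k : Fin n) : bflip (bflip x k) k = x := by
  funext j
  by_cases h : j = k
  · subst h; simp [bflip_apply_self]
  · simp [bflip_apply_of_ne _ h]

theorem bflip_comm (x : Fin n → Bool) (k l : Fin n) :
    bflip (bflip x k) l = bflip (bflip x l) k := by
  funext j
  by_cases hk : j = k <;> by_cases hl : j = l <;>
    simp_all [bflip_apply_self, bflip_apply_of_ne]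

theorem ltqFlip_ltqFlip (x : Fin n → Bool) (k : Fin n) : ltqFlip (ltqFlip x k) k = x := by
  -- the twist is governed by bit `0`, which the flip leaves alone when `2 ≤ k`
  have hcond : (2 ≤ (k : ℕ) ∧ ltqFlip x k ⟨0, k.pos⟩ = true) ↔
      (2 ≤ (k : ℕ) ∧ x ⟨0, k.pos⟩ = true) :=
    and_congr_right fun hk => by
      rw [ltqFlip_apply_of_ne x (Fin.ne_of_val_ne (by dsimp only; omega)) (by dsimp only; omega)]
  rw [ltqFlip, if_congr hcond rfl rfl]
  split_ifs with h
  · rw [ltqFlip, if_pos h, bflip_comm _ k, bflip_bflip, bflip_bflip]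
  · rw [ltqFlip, if_neg h, bflip_bflip]

theorem exists_eq_ltqFlip_of_cubeAdj {x y : Fin n → Bool} (h : cubeAdj n x y) :
    ∃ k, y = ltqFlip x k := by
  rcases h with ⟨k, hk, rfl⟩ | ⟨k, hk, ⟨_, hx0, rfl⟩ | ⟨_, hx0, rfl⟩⟩
  · exact ⟨k, by rw [ltqFlip, if_neg fun h => by omega]⟩
  · exact ⟨k, by rw [ltqFlip, if_pos ⟨hk, hx0⟩]⟩
  · exact ⟨k, by rw [ltqFlip, if_neg fun h => by simp_all]⟩

end LocallyTwistedCube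

namespace LeTQ

variable {s t : ℕ}

/-- The vertex `(a, b, c)` as the bit string `b₀ … b_{t-1} a₀ … a_{s-1} c 0 0 …`. -/
def bits (u : LeTQVert s t) (j : ℕ) : Bool :=
  if h : j < t then u.2.1 ⟨j, h⟩
  else if h' : j < t + s then u.1 ⟨j - t, by omega⟩
  else if j = s + t then u.2.2
  else false

/-- The only possible neighbour of `u` whose bit string differs from that of `u` highest at `j`. -/
def move (u : LeTQVert s t) (j : ℕ) : LeTQVert s t :=
  if h : j < t then (u.1, ltqFlip u.2.1 ⟨j, h⟩, u.2.2)
  else if h' : j < t + s then (ltqFlip u.1 ⟨j - t, by omega⟩, u.2.1, u.2.2)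
  else (u.1, u.2.1, !u.2.2)

theorem bits_of_lt (u : LeTQVert s t) {j : ℕ} (hj : s + t < j) : bits u j = false := by
  rw [bits, dif_neg (by omega), dif_neg (by omega), if_neg (by omega)]

theorem bits_add_eq_snd_snd (u : LeTQVert s t) : bits u (s + t) = u.2.2 := by
  rw [bits, dif_neg (by omega), dif_neg (by omega), if_pos rfl]

theorem isTopDiff_bits_snd (a : Fin s → Bool) {b b' : Fin t → Bool} (c : Bool) {k : Fin t}
    (h : IsTopDiff b b' k) : IsTopDiff (bits (a, b, c)) (bits (a, b', c)) k := by
  refine ⟨by simpa [bits] using h.1, fun j hj => ?_⟩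
  unfold bits
  split_ifs with hjt
  · exact h.2 ⟨j, hjt⟩ hj
  all_goals rfl

theorem isTopDiff_bits_fst {a a' : Fin s → Bool} (b : Fin t → Bool) (c : Bool) {k : Fin s}
    (h : IsTopDiff a a' k) : IsTopDiff (bits (a, b, c)) (bits (a', b, c)) (t + k) := by
  refine ⟨by simpa [bits] using h.1, fun j hj => ?_⟩
  unfold bits
  split_ifs with hjt hjs
  · rfl
  · exact h.2 ⟨j - t, by omega⟩ (show (k : ℕ) < j - t by omega)
  all_goals rfl

theorem isTopDiff_bits_not (a : Fin s → Bool) (b : Fin t → Bool) (c : Bool) :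
    IsTopDiff (bits (a, b, c)) (bits (a, b, !c)) (s + t) :=
  ⟨by simp [bits_add_eq_snd_snd], fun _ hj => by rw [bits_of_lt _ hj, bits_of_lt _ hj]⟩

theorem move_move (u : LeTQVert s t) (j : ℕ) : move (move u j) j = u := by
  unfold move
  split_ifs <;> simp [ltqFlip_ltqFlip]

theorem exists_isTopDiff_eq_move_of_adjOne {u v : LeTQVert s t} (h : LeTQAdjOne s t u v) :
    ∃ k, IsTopDiff (bits u) (bits v) k ∧ v = move u k := by
  obtain ⟨a, b, c⟩ := u
  obtain ⟨a', b', c'⟩ := v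
  rcases h with ⟨rfl, rfl, hc⟩ | ⟨rfl, rfl, rfl, hb⟩ | ⟨rfl, rfl, rfl, ha⟩
  · obtain rfl : c = !c' := hc
    exact ⟨s + t, by simpa using isTopDiff_bits_not a b (!c'), by simp [move, Nat.add_comm]⟩
  · obtain ⟨k, rfl⟩ := exists_eq_ltqFlip_of_cubeAdj hb
    exact ⟨k, isTopDiff_bits_snd a true (isTopDiff_ltqFlip b k), by simp [move]⟩
  · obtain ⟨k, rfl⟩ := exists_eq_ltqFlip_of_cubeAdj ha
    exact ⟨t + k, isTopDiff_bits_fst b false (isTopDiff_ltqFlip a k), by simp [move]⟩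

theorem exists_isTopDiff_eq_move {u v : LeTQVert s t} (h : (LeTQ s t).Adj u v) :
    ∃ k, IsTopDiff (bits u) (bits v) k ∧ v = move u k := by
  rcases h.2 with huv | hvu
  · exact exists_isTopDiff_eq_move_of_adjOne huv
  · obtain ⟨k, hk, rfl⟩ := exists_isTopDiff_eq_move_of_adjOne hvu
    exact ⟨k, hk.symm, (move_move v k).symm⟩

end LeTQ

theorem stmt6_general (s t g : ℕ) (S : Set (LeTQVert s t))
    (hne : S.Nonempty)
    (hdeg : ∀ v ∈ S, g ≤ ((LeTQ s t).neighborSet v ∩ S).ncard) :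
    2 ^ g ≤ S.ncard :=
  two_pow_le_ncard_of_edgesBelow (fun _ _ h => LeTQ.exists_isTopDiff_eq_move h) (s + t + 1)
    hne hdeg fun x _ y _ _ _ hj => (LeTQ.bits_of_lt x hj).trans (LeTQ.bits_of_lt y hj).symm

/-- A subgraph of LeTQ(s,t) of minimum degree at least g has at least 2^g vertices. -/
theorem stmt6 (s t g : ℕ) (hs : 1 ≤ s) (ht : 1 ≤ t) (S : Set (LeTQVert s t))
    (hne : S.Nonempty)
    (hdeg : ∀ v ∈ S, g ≤ ((LeTQ s t).neighborSet v ∩ S).ncard) :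
    2 ^ g ≤ S.ncard :=
  stmt6_general s t g S hne hdeg
end
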